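/- arXiv:0807.2099 — 3 statements merged into one kernel-verified Lean document; each statement's English description precedes it below -/
import Mathlib

section
/- Let n be a positive integer such that there exists an additively indecomposable positive-definite ℤ-lattice of rank n. Then any n-criterion set must contain at least one additively indecomposable lattice of rank n. -/
open Matrix

/-- A (Gram matrix of a) positive-definite integral `ℤ`-lattice. -/
def PosDefLat {ι : Type} [Fintype ι] (A : Matrix ι ι ℤ) : Prop :=
  A.IsSymm ∧ ∀ x : ι → ℤ, x ≠ 0 → 0 < x ⬝ᵥ A *ᵥ x

/-- `L` represents `A`: there is a bilinear-form-preserving `ℤ`-linear map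
(automatically injective when the forms are positive definite). -/
def Represents {ι κ : Type} [Fintype ι] [Fintype κ]
    (L : Matrix ι ι ℤ) (A : Matrix κ κ ℤ) : Prop :=
  ∃ M : Matrix ι κ ℤ, Mᵀ * L * M = A

/-- Two positive-definite lattices are isometric iff each represents the other. -/
def LatIsometric {ι κ : Type} [Fintype ι] [Fintype κ]
    (A : Matrix ι ι ℤ) (B : Matrix κ κ ℤ) : Prop :=
  Represents A B ∧ Represents B A

/-- `L` is `n`-universal: it represents every positive-definite rank-`n` lattice. -/
def NUniversal (n : ℕ) {ι : Type} [Fintype ι] (L : Matrix ι ι ℤ) : Prop :=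
  ∀ A : Matrix (Fin n) (Fin n) ℤ, PosDefLat A → Represents L A

/-- An `n`-criterion set: a set of positive-definite rank-`n` lattices such that a
lattice is `n`-universal iff it represents every member of the set. -/
def IsCriterionSet (n : ℕ) (S : Finset (Matrix (Fin n) (Fin n) ℤ)) : Prop :=
  (∀ A ∈ S, PosDefLat A) ∧
  ∀ (m : ℕ) (L : Matrix (Fin m) (Fin m) ℤ), PosDefLat L →
    (NUniversal n L ↔ ∀ A ∈ S, Represents L A)

/-- `A` is additively indecomposable: whenever an orthogonal sum `B₁ ⊥ B₂` of
positive-definite lattices represents `A` (via block components `M₁`, `M₂`),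
the projection to one factor is zero. -/
def AddIndecomposable {κ : Type} [Fintype κ] (A : Matrix κ κ ℤ) : Prop :=
  ∀ (m₁ m₂ : ℕ) (B₁ : Matrix (Fin m₁) (Fin m₁) ℤ) (B₂ : Matrix (Fin m₂) (Fin m₂) ℤ),
    PosDefLat B₁ → PosDefLat B₂ →
    ∀ (M₁ : Matrix (Fin m₁) κ ℤ) (M₂ : Matrix (Fin m₂) κ ℤ),
      M₁ᵀ * B₁ * M₁ + M₂ᵀ * B₂ * M₂ = A → M₁ = 0 ∨ M₂ = 0

/-- The Gram matrix of the `E₈` root lattice. -/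
def E8 : Matrix (Fin 8) (Fin 8) ℤ :=
  !![ 2, -1,  0,  0,  0,  0,  0,  0;
     -1,  2, -1,  0,  0,  0,  0,  0;
      0, -1,  2, -1,  0,  0,  0,  0;
      0,  0, -1,  2, -1,  0,  0,  0;
      0,  0,  0, -1,  2, -1,  0, -1;
      0,  0,  0,  0, -1,  2, -1,  0;
      0,  0,  0,  0,  0, -1,  2,  0;
      0,  0,  0,  0, -1,  0,  0,  2]

/-! Glue the members of a criterion set `S` into one orthogonal sum `L`. It represents every
member of `S`, so it is `n`-universal and represents the given indecomposable `E`; by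
indecomposability a single summand `A ∈ S` already represents `E`. As `A` and `E` have the same
rank and `E` is positive definite, the representing matrix is nonsingular and can be cancelled,
so a splitting of `A` with both projections nonzero would pull back to such a splitting of `E`. -/

theorem Represents.trans {ι κ μ : Type} [Fintype ι] [Fintype κ] [Fintype μ]
    {L : Matrix ι ι ℤ} {A : Matrix κ κ ℤ} {B : Matrix μ μ ℤ}
    (hLA : Represents L A) (hAB : Represents A B) : Represents L B := by
  obtain ⟨M, rfl⟩ := hLA
  obtain ⟨N, rfl⟩ := hAB
  exact ⟨M * N, by simp only [transpose_mul, Matrix.mul_assoc]⟩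

theorem represents_submatrix_self {ι κ : Type} [Fintype ι] [Fintype κ] [DecidableEq ι]
    (L : Matrix ι ι ℤ) (f : κ → ι) : Represents L (L.submatrix f f) :=
  ⟨(1 : Matrix ι ι ℤ).submatrix id f, by ext; simp [mul_apply, one_apply]⟩

theorem represents_reindex_iff {ι ι' κ : Type} [Fintype ι] [Fintype ι'] [Fintype κ]
    (e : ι ≃ ι') (L : Matrix ι ι ℤ) (A : Matrix κ κ ℤ) :
    Represents (reindex e e L) A ↔ Represents L A := by
  classical
  have hback : Represents (reindex e e L) L := by
    simpa using represents_submatrix_self (reindex e e L) e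
  exact ⟨(represents_submatrix_self L e.symm).trans, hback.trans⟩

theorem PosDefLat.reindex {ι ι' : Type} [Fintype ι] [Fintype ι'] (e : ι ≃ ι')
    {L : Matrix ι ι ℤ} (hL : PosDefLat L) : PosDefLat (reindex e e L) := by
  refine ⟨by simp [Matrix.IsSymm, hL.1.eq], fun x hx => ?_⟩
  rw [reindex_apply, submatrix_mulVec_equiv, dotProduct_comp_equiv_symm]
  exact hL.2 _ fun h => hx (by simpa [Function.comp_assoc] using congrArg (· ∘ e.symm) h)

theorem PosDefLat.quadForm_nonneg {ι : Type} [Fintype ι] {L : Matrix ι ι ℤ}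
    (hL : PosDefLat L) (x : ι → ℤ) : 0 ≤ x ⬝ᵥ L *ᵥ x := by
  rcases eq_or_ne x 0 with rfl | hx
  · simp
  · exact (hL.2 x hx).le

theorem PosDefLat.fromBlocks {ι κ : Type} [Fintype ι] [Fintype κ]
    {A : Matrix ι ι ℤ} {B : Matrix κ κ ℤ} (hA : PosDefLat A) (hB : PosDefLat B) :
    PosDefLat (fromBlocks A 0 0 B) := by
  refine ⟨by simp [Matrix.IsSymm, fromBlocks_transpose, hA.1.eq, hB.1.eq], fun x hx => ?_⟩
  have hsplit : x ⬝ᵥ Matrix.fromBlocks A 0 0 B *ᵥ x =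
      (x ∘ Sum.inl) ⬝ᵥ A *ᵥ (x ∘ Sum.inl) + (x ∘ Sum.inr) ⬝ᵥ B *ᵥ (x ∘ Sum.inr) := by
    simp [fromBlocks_mulVec, dotProduct, Fintype.sum_sum_type]
  have hx' : x ∘ Sum.inl ≠ 0 ∨ x ∘ Sum.inr ≠ 0 := by
    by_contra! h
    exact hx (funext (Sum.rec (congrFun h.1) (congrFun h.2)))
  rw [hsplit]
  rcases hx' with h | h
  · linarith [hA.2 _ h, hB.quadForm_nonneg (x ∘ Sum.inr)]
  · linarith [hA.quadForm_nonneg (x ∘ Sum.inl), hB.2 _ h]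

theorem transpose_fromRows_mul_fromBlocks_mul_fromRows {ι κ μ : Type}
    [Fintype ι] [Fintype κ] (A : Matrix ι ι ℤ) (B : Matrix κ κ ℤ)
    (M₁ : Matrix ι μ ℤ) (M₂ : Matrix κ μ ℤ) :
    (fromRows M₁ M₂)ᵀ * fromBlocks A 0 0 B * fromRows M₁ M₂ =
      M₁ᵀ * A * M₁ + M₂ᵀ * B * M₂ := by
  rw [Matrix.mul_assoc, fromBlocks_mul_fromRows, transpose_fromRows, fromCols_mul_fromRows]
  simp [Matrix.mul_assoc]

theorem represents_fromBlocks_iff {ι κ μ : Type} [Fintype ι] [Fintype κ] [Fintype μ]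
    (A : Matrix ι ι ℤ) (B : Matrix κ κ ℤ) (E : Matrix μ μ ℤ) :
    Represents (fromBlocks A 0 0 B) E ↔
      ∃ (M₁ : Matrix ι μ ℤ) (M₂ : Matrix κ μ ℤ), M₁ᵀ * A * M₁ + M₂ᵀ * B * M₂ = E := by
  constructor
  · rintro ⟨M, rfl⟩
    refine ⟨M.toRows₁, M.toRows₂, ?_⟩
    rw [← transpose_fromRows_mul_fromBlocks_mul_fromRows, fromRows_toRows]
  · rintro ⟨M₁, M₂, rfl⟩
    exact ⟨fromRows M₁ M₂, transpose_fromRows_mul_fromBlocks_mul_fromRows A B M₁ M₂⟩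

def orthogonalSum {a b : ℕ} (A : Matrix (Fin a) (Fin a) ℤ) (B : Matrix (Fin b) (Fin b) ℤ) :
    Matrix (Fin (a + b)) (Fin (a + b)) ℤ :=
  reindex finSumFinEquiv finSumFinEquiv (fromBlocks A 0 0 B)

section OrthogonalSum

variable {a b : ℕ} {A : Matrix (Fin a) (Fin a) ℤ} {B : Matrix (Fin b) (Fin b) ℤ}

theorem PosDefLat.orthogonalSum (hA : PosDefLat A) (hB : PosDefLat B) :
    PosDefLat (orthogonalSum A B) :=
  (hA.fromBlocks hB).reindex _

theorem represents_orthogonalSum_iff {κ : Type} [Fintype κ] (E : Matrix κ κ ℤ) :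
    Represents (orthogonalSum A B) E ↔
      ∃ (M₁ : Matrix (Fin a) κ ℤ) (M₂ : Matrix (Fin b) κ ℤ), M₁ᵀ * A * M₁ + M₂ᵀ * B * M₂ = E :=
  (represents_reindex_iff _ _ E).trans (represents_fromBlocks_iff A B E)

theorem represents_orthogonalSum_left : Represents (orthogonalSum A B) A :=
  (represents_orthogonalSum_iff A).2 ⟨1, 0, by simp⟩

theorem represents_orthogonalSum_right : Represents (orthogonalSum A B) B :=
  (represents_orthogonalSum_iff B).2 ⟨0, 1, by simp⟩

theorem AddIndecomposable.represents_of_represents_orthogonalSum {κ : Type} [Fintype κ]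
    {E : Matrix κ κ ℤ} (hE : AddIndecomposable E) (hA : PosDefLat A) (hB : PosDefLat B)
    (h : Represents (orthogonalSum A B) E) : Represents A E ∨ Represents B E := by
  obtain ⟨M₁, M₂, hM⟩ := (represents_orthogonalSum_iff E).1 h
  rcases hE a b A B hA hB M₁ M₂ hM with rfl | rfl
  · exact Or.inr ⟨M₂, by simpa using hM⟩
  · exact Or.inl ⟨M₁, by simpa using hM⟩

end OrthogonalSum

theorem PosDefLat.not_represents_of_isEmpty {ι κ : Type} [Fintype ι] [IsEmpty ι] [Fintype κ]
    [Nonempty κ] {E : Matrix κ κ ℤ} (hE : PosDefLat E) (L : Matrix ι ι ℤ) :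
    ¬ Represents L E := by
  rintro ⟨M, rfl⟩
  obtain ⟨x, hx⟩ : ∃ x : κ → ℤ, x ≠ 0 := exists_ne 0
  simpa [Subsingleton.elim M 0] using hE.2 x hx

theorem exists_posDefLat_represents_finset {n : ℕ} (S : Finset (Matrix (Fin n) (Fin n) ℤ))
    (hS : ∀ A ∈ S, PosDefLat A) :
    ∃ (m : ℕ) (L : Matrix (Fin m) (Fin m) ℤ), PosDefLat L ∧ (∀ A ∈ S, Represents L A) ∧
      ∀ (κ : Type) [Fintype κ] [Nonempty κ] (E : Matrix κ κ ℤ), PosDefLat E →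
        AddIndecomposable E → Represents L E → ∃ A ∈ S, Represents A E := by
  classical
  induction S using Finset.induction_on with
  | empty =>
    refine ⟨0, 0, ⟨by simp [Matrix.IsSymm], fun x hx => (hx (Subsingleton.elim x 0)).elim⟩,
      by simp, fun κ _ _ E hE _ h => (hE.not_represents_of_isEmpty 0 h).elim⟩
  | insert A S _ ih =>
    obtain ⟨m, L, hL, hLS, hLind⟩ := ih fun B hB => hS B (Finset.mem_insert_of_mem hB)
    have hA := hS A (Finset.mem_insert_self A S)
    refine ⟨n + m, orthogonalSum A L, hA.orthogonalSum hL, ?_, ?_⟩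
    · intro B hB
      rcases Finset.mem_insert.1 hB with rfl | hB
      · exact represents_orthogonalSum_left
      · exact represents_orthogonalSum_right.trans (hLS B hB)
    · intro κ _ _ E hE hEind h
      rcases hEind.represents_of_represents_orthogonalSum hA hL h with hAE | hLE
      · exact ⟨A, Finset.mem_insert_self A S, hAE⟩
      · obtain ⟨B, hB, hBE⟩ := hLind κ E hE hEind hLE
        exact ⟨B, Finset.mem_insert_of_mem hB, hBE⟩

theorem PosDefLat.det_ne_zero_of_transpose_mul_mul_eq {κ : Type} [Fintype κ] [DecidableEq κ]
    {A E M : Matrix κ κ ℤ} (hE : PosDefLat E) (hM : Mᵀ * A * M = E) : M.det ≠ 0 := by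
  intro hdet
  obtain ⟨v, hv, hMv⟩ := exists_mulVec_eq_zero_iff.2 hdet
  have hzero : v ⬝ᵥ E *ᵥ v = 0 := by
    rw [← hM, ← mulVec_mulVec, ← mulVec_mulVec, hMv]
    simp
  exact (hE.2 v hv).ne' hzero

theorem Matrix.eq_zero_of_mul_eq_zero_of_det_ne_zero {R l κ : Type*} [CommRing R] [IsDomain R]
    [Fintype κ] [DecidableEq κ] {N : Matrix l κ R} {M : Matrix κ κ R}
    (h : N * M = 0) (hM : M.det ≠ 0) : N = 0 := by
  have hsmul : M.det • N = 0 := by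
    simpa [Matrix.mul_assoc, mul_adjugate] using congrArg (· * M.adjugate) h
  ext i j
  simpa [hM] using congrFun₂ hsmul i j

theorem AddIndecomposable.of_represents {κ : Type} [Fintype κ] {A E : Matrix κ κ ℤ}
    (hEind : AddIndecomposable E) (hE : PosDefLat E) (h : Represents A E) :
    AddIndecomposable A := by
  classical
  obtain ⟨M, hM⟩ := h
  have hdet := hE.det_ne_zero_of_transpose_mul_mul_eq hM
  intro m₁ m₂ B₁ B₂ hB₁ hB₂ N₁ N₂ hN
  have hE' : (N₁ * M)ᵀ * B₁ * (N₁ * M) + (N₂ * M)ᵀ * B₂ * (N₂ * M) = E := by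
    rw [← hM, ← hN]
    simp only [transpose_mul, Matrix.add_mul, Matrix.mul_add, Matrix.mul_assoc]
  exact (hEind m₁ m₂ B₁ B₂ hB₁ hB₂ _ _ hE').imp
    (eq_zero_of_mul_eq_zero_of_det_ne_zero · hdet) (eq_zero_of_mul_eq_zero_of_det_ne_zero · hdet)

/-- If there is an additively indecomposable positive-definite lattice of rank
`n`, then every `n`-criterion set contains an additively indecomposable lattice. -/
theorem criterion_set_contains_indecomposable (n : ℕ) (hn : 0 < n)
    (hex : ∃ E : Matrix (Fin n) (Fin n) ℤ, PosDefLat E ∧ AddIndecomposable E) :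
    ∀ S : Finset (Matrix (Fin n) (Fin n) ℤ), IsCriterionSet n S →
      ∃ E ∈ S, AddIndecomposable E := by
  intro S hS
  obtain ⟨E, hE, hEind⟩ := hex
  obtain ⟨m, L, hL, hLS, hLind⟩ := exists_posDefLat_represents_finset S hS.1
  have hLuniv : NUniversal n L := (hS.2 m L hL).2 hLS
  have : Nonempty (Fin n) := ⟨⟨0, hn⟩⟩
  obtain ⟨A, hAS, hAE⟩ := hLind (Fin n) E hE hEind (hLuniv E hE)
  exact ⟨A, hAS, hEind.of_represents hE hAE⟩
end

section
/- The lattice E_8 is additively indecomposable: if an orthogonal sum L_1 ⊥ L_2 of positive-definite ℤ-lattices represents E_8, then the image of E_8 lies entirely in L_1 or entirely in L_2 (i.e., its projection to one factor is zero). -/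
/-!
Write `E₈ = A₁ + A₂` with `Aₖ = Mₖᵀ Bₖ Mₖ` positive semidefinite. If `A₁(r, r) = 1`, unimodularity
gives `u` with `E₈ u = A₁ r`, and `c := E₈(u, u) = A₁(u, r)` is even. Cauchy–Schwarz for `A₁`
against the unit vector `r` gives `c² ≤ A₁(u, u) ≤ E₈(u, u) = c`, so `c = 0`; then `u` lies in the
radicals of `A₁` and `A₂`, whence `A₁ r = 0`, a contradiction. So every root `eᵢ` of `E₈` (norm 2)
has norm `0` in one component and `2` in the other. A root of norm `0` in `A₁` is `A₁`-orthogonal to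
everything, so it forces its Dynkin neighbours to have norm `0` in `A₁` as well; since the Dynkin
diagram is connected, one component vanishes on all roots and hence is zero.
-/

open Matrix

def PosSemidefLat {ι : Type} [Fintype ι] (A : Matrix ι ι ℤ) : Prop :=
  A.IsSymm ∧ ∀ x : ι → ℤ, 0 ≤ x ⬝ᵥ A *ᵥ x

def EvenUnimodular {κ : Type} [Fintype κ] [DecidableEq κ] (E : Matrix κ κ ℤ) : Prop :=
  IsUnit E.det ∧ ∀ x : κ → ℤ, Even (x ⬝ᵥ E *ᵥ x)

section PosSemidef

variable {ι : Type} [Fintype ι] {A : Matrix ι ι ℤ}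

theorem Matrix.IsSymm.dotProduct_mulVec_comm (hA : A.IsSymm) (x y : ι → ℤ) :
    x ⬝ᵥ A *ᵥ y = y ⬝ᵥ A *ᵥ x := by
  rw [dotProduct_mulVec, ← mulVec_transpose, hA.eq, dotProduct_comm]

theorem Matrix.IsSymm.dotProduct_mulVec_smul_add (hA : A.IsSymm) (t : ℤ) (x y : ι → ℤ) :
    (t • x + y) ⬝ᵥ A *ᵥ (t • x + y) =
      t ^ 2 * (x ⬝ᵥ A *ᵥ x) + 2 * t * (y ⬝ᵥ A *ᵥ x) + y ⬝ᵥ A *ᵥ y := by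
  simp only [mulVec_add, mulVec_smul, add_dotProduct, dotProduct_add, smul_dotProduct,
    dotProduct_smul, smul_eq_mul, hA.dotProduct_mulVec_comm x y]
  ring

theorem PosSemidefLat.dotProduct_mulVec_zero_iff (hA : PosSemidefLat A) (x : ι → ℤ) :
    x ⬝ᵥ A *ᵥ x = 0 ↔ A *ᵥ x = 0 := by
  classical
  refine ⟨fun hx => ?_, fun hx => by rw [hx, dotProduct_zero]⟩
  have horth (y : ι → ℤ) : y ⬝ᵥ A *ᵥ x = 0 := by
    set a := y ⬝ᵥ A *ᵥ x
    have hy := hA.2 y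
    -- `t ↦ A(t x + y, t x + y) = 2 t a + A(y, y)` is affine and nonnegative, so `a = 0`
    have ht := hA.2 ((-(a * (y ⬝ᵥ A *ᵥ y + 1))) • x + y)
    rw [hA.1.dotProduct_mulVec_smul_add, hx] at ht
    by_contra ha
    have ha2 : 1 ≤ a ^ 2 := by have := sq_pos_of_ne_zero ha; omega
    nlinarith [mul_le_mul_of_nonneg_right ha2 hy]
  ext j
  simpa using horth (Pi.single j 1)

theorem PosSemidefLat.apply_eq_zero_of_diag_eq_zero (hA : PosSemidefLat A) {i : ι}
    (hi : A i i = 0) (j : ι) : A j i = 0 := by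
  classical
  have : A *ᵥ Pi.single i 1 = 0 := (hA.dotProduct_mulVec_zero_iff _).1 (by simpa using hi)
  simpa using congrFun this j

theorem PosSemidefLat.sq_le_of_dotProduct_mulVec_self_eq_one (hA : PosSemidefLat A)
    {r : ι → ℤ} (hr : r ⬝ᵥ A *ᵥ r = 1) (u : ι → ℤ) :
    (u ⬝ᵥ A *ᵥ r) ^ 2 ≤ u ⬝ᵥ A *ᵥ u := by
  have h := hA.2 ((-(u ⬝ᵥ A *ᵥ r)) • r + u)
  rw [hA.1.dotProduct_mulVec_smul_add, hr] at h
  nlinarith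

end PosSemidef

section Pullback

variable {ι κ : Type} [Fintype ι] [Fintype κ] {B : Matrix ι ι ℤ}

theorem dotProduct_transpose_mul_mul_mulVec (M : Matrix ι κ ℤ)
    (x y : κ → ℤ) : x ⬝ᵥ (Mᵀ * B * M) *ᵥ y = (M *ᵥ x) ⬝ᵥ B *ᵥ (M *ᵥ y) := by
  rw [Matrix.mul_assoc, ← mulVec_mulVec, ← mulVec_mulVec, dotProduct_mulVec x,
    vecMul_transpose, dotProduct_mulVec (M *ᵥ x)]

theorem PosDefLat.mulVec_eq_zero_of_dotProduct_transpose_mul_mul (hB : PosDefLat B)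
    {M : Matrix ι κ ℤ} {x : κ → ℤ} (hx : x ⬝ᵥ (Mᵀ * B * M) *ᵥ x = 0) : M *ᵥ x = 0 := by
  by_contra hMx
  have := hB.2 _ hMx
  rw [dotProduct_transpose_mul_mul_mulVec] at hx
  omega

theorem PosDefLat.posSemidefLat_transpose_mul_mul (hB : PosDefLat B) (M : Matrix ι κ ℤ) :
    PosSemidefLat (Mᵀ * B * M) := by
  refine ⟨?_, fun x => ?_⟩
  · rw [IsSymm, transpose_mul, transpose_mul, transpose_transpose, hB.1.eq, Matrix.mul_assoc]
  · rw [dotProduct_transpose_mul_mul_mulVec]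
    rcases eq_or_ne (M *ᵥ x) 0 with h0 | h0
    · simp [h0]
    · exact (hB.2 _ h0).le

theorem PosDefLat.eq_zero_of_diag_transpose_mul_mul (hB : PosDefLat B) {M : Matrix ι κ ℤ}
    (hd : ∀ i, (Mᵀ * B * M) i i = 0) : M = 0 := by
  classical
  ext a i
  have hMi : M *ᵥ Pi.single i 1 = 0 :=
    hB.mulVec_eq_zero_of_dotProduct_transpose_mul_mul (by simpa using hd i)
  simpa using congrFun hMi a

end Pullback

section EvenUnimodular

variable {κ : Type} [Fintype κ] [DecidableEq κ] {E A₁ A₂ : Matrix κ κ ℤ}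

theorem EvenUnimodular.dotProduct_mulVec_self_ne_one (hE : EvenUnimodular E)
    (hA₁ : PosSemidefLat A₁) (hA₂ : PosSemidefLat A₂) (h : A₁ + A₂ = E) (r : κ → ℤ) :
    r ⬝ᵥ A₁ *ᵥ r ≠ 1 := by
  intro hr
  set u := E⁻¹ *ᵥ (A₁ *ᵥ r)
  have hEu : E *ᵥ u = A₁ *ᵥ r := by rw [mulVec_mulVec, mul_nonsing_inv _ hE.1, one_mulVec]
  set c := u ⬝ᵥ A₁ *ᵥ r
  have hc_even : Even c := by simpa only [hEu] using hE.2 u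
  have hc_split : u ⬝ᵥ A₁ *ᵥ u + u ⬝ᵥ A₂ *ᵥ u = c := by
    rw [← dotProduct_add, ← add_mulVec, h, hEu]
  have hcs := hA₁.sq_le_of_dotProduct_mulVec_self_eq_one hr u
  have hu₁ := hA₁.2 u
  have hu₂ := hA₂.2 u
  have hc : c = 0 := by
    obtain ⟨k, hk⟩ := hc_even
    have : 0 ≤ c ∧ c ≤ 1 := by constructor <;> nlinarith
    omega
  have hA₁u : A₁ *ᵥ u = 0 := (hA₁.dotProduct_mulVec_zero_iff u).1 (by nlinarith)
  have hA₂u : A₂ *ᵥ u = 0 := (hA₂.dotProduct_mulVec_zero_iff u).1 (by omega)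
  have hA₁r : A₁ *ᵥ r = 0 := by rw [← hEu, ← h, add_mulVec, hA₁u, hA₂u, add_zero]
  simp [hA₁r] at hr

theorem EvenUnimodular.diag_eq_zero_or_diag_eq_zero (hE : EvenUnimodular E)
    (hA₁ : PosSemidefLat A₁) (hA₂ : PosSemidefLat A₂) (h : A₁ + A₂ = E) {i : κ}
    (hi : E i i = 2) : A₁ i i = 0 ∨ A₂ i i = 0 := by
  have hsum : A₁ i i + A₂ i i = 2 := by rw [← hi, ← h, Matrix.add_apply]
  have h₁ : A₁ i i ≠ 1 := by simpa using hE.dotProduct_mulVec_self_ne_one hA₁ hA₂ h (Pi.single i 1)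
  have h₂ : A₂ i i ≠ 1 := by
    simpa using hE.dotProduct_mulVec_self_ne_one hA₂ hA₁ ((add_comm _ _).trans h) (Pi.single i 1)
  have h₁' : 0 ≤ A₁ i i := by simpa using hA₁.2 (Pi.single i 1)
  have h₂' : 0 ≤ A₂ i i := by simpa using hA₂.2 (Pi.single i 1)
  omega

theorem EvenUnimodular.diag_eq_zero_of_apply_ne_zero (hE : EvenUnimodular E)
    (hA₁ : PosSemidefLat A₁) (hA₂ : PosSemidefLat A₂) (h : A₁ + A₂ = E) {i j : κ}
    (hj : E j j = 2) (hji : E j i ≠ 0) (hi : A₁ i i = 0) : A₁ j j = 0 := by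
  refine (hE.diag_eq_zero_or_diag_eq_zero hA₁ hA₂ h hj).resolve_right fun hj₂ => hji ?_
  rw [← h, Matrix.add_apply, hA₁.apply_eq_zero_of_diag_eq_zero hi, hA₂.1.apply,
    hA₂.apply_eq_zero_of_diag_eq_zero hj₂, add_zero]

end EvenUnimodular

theorem E8_evenUnimodular : EvenUnimodular E8 := by
  refine ⟨isUnit_det_of_right_inverse (B := !![2, 3, 4, 5, 6, 4, 2, 3;
    3, 6, 8, 10, 12, 8, 4, 6;
    4, 8, 12, 15, 18, 12, 6, 9;
    5, 10, 15, 20, 24, 16, 8, 12;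
    6, 12, 18, 24, 30, 20, 10, 15;
    4, 8, 12, 16, 20, 14, 7, 10;
    2, 4, 6, 8, 10, 7, 4, 5;
    3, 6, 9, 12, 15, 10, 5, 8]) (by decide), fun x => ?_⟩
  set U : Matrix (Fin 8) (Fin 8) ℤ := !![1, -1, 0, 0, 0, 0, 0, 0;
    0, 1, -1, 0, 0, 0, 0, 0;
    0, 0, 1, -1, 0, 0, 0, 0;
    0, 0, 0, 1, -1, 0, 0, 0;
    0, 0, 0, 0, 1, -1, 0, -1;
    0, 0, 0, 0, 0, 1, -1, 0;
    0, 0, 0, 0, 0, 0, 1, 0;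
    0, 0, 0, 0, 0, 0, 0, 1]
  have hU : E8 = U + Uᵀ := by decide
  have hUt : x ⬝ᵥ Uᵀ *ᵥ x = x ⬝ᵥ U *ᵥ x := by
    rw [dotProduct_mulVec, vecMul_transpose, dotProduct_comm]
  exact ⟨x ⬝ᵥ U *ᵥ x, by rw [hU, add_mulVec, dotProduct_add, hUt]⟩

theorem E8_diag_eq_zero_of_add_eq {A₁ A₂ : Matrix (Fin 8) (Fin 8) ℤ} (hA₁ : PosSemidefLat A₁)
    (hA₂ : PosSemidefLat A₂) (h : A₁ + A₂ = E8) (h0 : A₁ 0 0 = 0) (i : Fin 8) :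
    A₁ i i = 0 := by
  have hdiag : ∀ j, E8 j j = 2 := by decide
  have step (i j : Fin 8) (hji : E8 j i ≠ 0) (hi : A₁ i i = 0) : A₁ j j = 0 :=
    E8_evenUnimodular.diag_eq_zero_of_apply_ne_zero hA₁ hA₂ h (hdiag j) hji hi
  have h1 := step 0 1 (by decide) h0
  have h2 := step 1 2 (by decide) h1
  have h3 := step 2 3 (by decide) h2
  have h4 := step 3 4 (by decide) h3
  have h5 := step 4 5 (by decide) h4
  have h6 := step 5 6 (by decide) h5
  have h7 := step 4 7 (by decide) h4
  fin_cases i <;> assumption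

/-- `E₈` is additively indecomposable: any representation of `E₈` into an
orthogonal sum of positive-definite lattices has zero projection to one factor. -/
theorem E8_addIndecomposable : AddIndecomposable E8 := by
  intro m₁ m₂ B₁ B₂ hB₁ hB₂ M₁ M₂ h
  have hA₁ := hB₁.posSemidefLat_transpose_mul_mul M₁
  have hA₂ := hB₂.posSemidefLat_transpose_mul_mul M₂
  rcases E8_evenUnimodular.diag_eq_zero_or_diag_eq_zero hA₁ hA₂ h (i := 0) rfl with h0 | h0
  · exact .inl (hB₁.eq_zero_of_diag_transpose_mul_mul (E8_diag_eq_zero_of_add_eq hA₁ hA₂ h h0))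
  · exact .inr (hB₂.eq_zero_of_diag_transpose_mul_mul
      (E8_diag_eq_zero_of_add_eq hA₂ hA₁ ((add_comm _ _).trans h) h0))
end

section
/- The set {I_8, E_8} is a minimal 8-criterion set: the lattice E_8 represents E_8 but does not represent I_8, and I_8 represents I_8 but does not represent E_8; hence neither singleton {I_8} nor {E_8} is an 8-criterion set. -/
open Matrix

/-!
E₈ is even, its Gram matrix being `Tᵀ + T` for an integral `T`, so it has no vector of
norm 1 and cannot represent I₈. E₈ is unimodular, so a representation of E₈ by I₈ (same
rank) would be an isometry, and I₈ cannot represent E₈ either. Both lattices are positive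
definite (E₈ because `4 E₈` is the Gram matrix of twice its simple roots in ℝ⁸), so if a
singleton `{L}` were an 8-criterion set, `L` would be 8-universal and would represent the
other lattice.
-/

section Lattice

variable {ι κ : Type} [Fintype ι]

lemma represents_refl [DecidableEq ι] (A : Matrix ι ι ℤ) : Represents A A :=
  ⟨1, by simp⟩

lemma transpose_mul_mul_apply_self (L : Matrix ι ι ℤ) (M : Matrix ι κ ℤ) (k : κ) :
    (Mᵀ * L * M) k k = Mᵀ k ⬝ᵥ L *ᵥ Mᵀ k := by
  rw [dotProduct_mulVec, mul_apply']
  rfl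

lemma dotProduct_add_transpose_mulVec (B : Matrix ι ι ℤ) (v : ι → ℤ) :
    v ⬝ᵥ (Bᵀ + B) *ᵥ v = 2 * (v ⬝ᵥ B *ᵥ v) := by
  rw [add_mulVec, dotProduct_add, dotProduct_mulVec v Bᵀ, vecMul_transpose, dotProduct_comm]
  ring

lemma not_represents_of_even [Fintype κ] {L : Matrix ι ι ℤ} {A : Matrix κ κ ℤ}
    (hL : ∀ v, Even (v ⬝ᵥ L *ᵥ v)) (k : κ) (hA : Odd (A k k)) : ¬ Represents L A := by
  rintro ⟨M, rfl⟩
  rw [transpose_mul_mul_apply_self] at hA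
  exact Int.not_even_iff_odd.mpr hA (hL _)

-- `det A = det M * det L * det M` forces `M` to be invertible over `ℤ`.
lemma represents_symm_of_isUnit_det [DecidableEq ι] {L A : Matrix ι ι ℤ}
    (hA : IsUnit A.det) (h : Represents L A) : Represents A L := by
  obtain ⟨M, rfl⟩ := h
  have hM : IsUnit M.det := by
    rw [det_mul] at hA
    exact isUnit_of_mul_isUnit_right hA
  refine ⟨M⁻¹, ?_⟩
  rw [transpose_nonsing_inv, Matrix.mul_assoc, Matrix.mul_assoc, mul_nonsing_inv M hM,
    Matrix.mul_one, ← Matrix.mul_assoc, nonsing_inv_mul Mᵀ (isUnit_det_transpose M hM),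
    Matrix.one_mul]

lemma dotProduct_transpose_mul_self_mulVec [Fintype κ] (C : Matrix κ ι ℤ) (x : ι → ℤ) :
    x ⬝ᵥ (Cᵀ * C) *ᵥ x = C *ᵥ x ⬝ᵥ C *ᵥ x := by
  rw [← mulVec_mulVec, dotProduct_mulVec, vecMul_transpose]

lemma posDefLat_of_transpose_mul_self_eq_smul [Fintype κ] [DecidableEq ι] {A : Matrix ι ι ℤ}
    (C : Matrix κ ι ℤ) {c : ℤ} (hc : 0 < c) (hC : Cᵀ * C = c • A) (hA : IsUnit A.det) :
    PosDefLat A := by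
  refine ⟨?_, fun x hx => ?_⟩
  · refine smul_right_injective _ hc.ne' (?_ : c • Aᵀ = c • A)
    rw [← transpose_smul, ← hC, transpose_mul, transpose_transpose]
  · have hCx : C *ᵥ x ≠ 0 := by
      intro h0
      have hAx : c • (A *ᵥ x) = c • (A *ᵥ 0) := by
        rw [← smul_mulVec, ← hC, ← mulVec_mulVec, h0, mulVec_zero, mulVec_zero, smul_zero]
      exact hx <| mulVec_injective_of_isUnit ((isUnit_iff_isUnit_det A).mpr hA)
        (smul_right_injective _ hc.ne' hAx)
    have hcA : 0 < c * (x ⬝ᵥ A *ᵥ x) := by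
      rw [← smul_eq_mul, ← dotProduct_smul, ← smul_mulVec, ← hC,
        dotProduct_transpose_mul_self_mulVec]
      exact lt_of_le_of_ne (Finset.sum_nonneg fun i _ => mul_self_nonneg _)
        (Ne.symm (mt dotProduct_self_eq_zero.mp hCx))
    exact pos_of_mul_pos_right hcA hc.le

lemma posDefLat_one [DecidableEq ι] : PosDefLat (1 : Matrix ι ι ℤ) :=
  posDefLat_of_transpose_mul_self_eq_smul 1 one_pos
    (by rw [transpose_one, Matrix.mul_one, one_smul]) (by simp)

end Lattice

lemma not_isCriterionSet_singleton {n : ℕ} {A B : Matrix (Fin n) (Fin n) ℤ}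
    (hB : PosDefLat B) (hAB : ¬ Represents A B) : ¬ IsCriterionSet n {A} := by
  intro h
  have hA : PosDefLat A := h.1 A (Finset.mem_singleton_self A)
  have hUniv : NUniversal n A := (h.2 n A hA).mpr fun A' hA' => by
    rw [Finset.mem_singleton.mp hA']
    exact represents_refl A
  exact hAB (hUniv B hB)

def E8inv : Matrix (Fin 8) (Fin 8) ℤ :=
  !![2, 3, 4, 5, 6, 4, 2, 3;
     3, 6, 8, 10, 12, 8, 4, 6;
     4, 8, 12, 15, 18, 12, 6, 9;
     5, 10, 15, 20, 24, 16, 8, 12;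
     6, 12, 18, 24, 30, 20, 10, 15;
     4, 8, 12, 16, 20, 14, 7, 10;
     2, 4, 6, 8, 10, 7, 4, 5;
     3, 6, 9, 12, 15, 10, 5, 8]

lemma E8inv_mul_E8 : E8inv * E8 = 1 := by decide

lemma isUnit_det_E8 : IsUnit E8.det :=
  isUnit_det_of_left_inverse E8inv_mul_E8

def E8Upper : Matrix (Fin 8) (Fin 8) ℤ :=
  !![1, -1,  0,  0,  0,  0,  0,  0;
     0,  1, -1,  0,  0,  0,  0,  0;
     0,  0,  1, -1,  0,  0,  0,  0;
     0,  0,  0,  1, -1,  0,  0,  0;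
     0,  0,  0,  0,  1, -1,  0, -1;
     0,  0,  0,  0,  0,  1, -1,  0;
     0,  0,  0,  0,  0,  0,  1,  0;
     0,  0,  0,  0,  0,  0,  0,  1]

lemma E8_eq_transpose_add : E8 = E8Upperᵀ + E8Upper := by decide

lemma even_dotProduct_E8_mulVec (v : Fin 8 → ℤ) : Even (v ⬝ᵥ E8 *ᵥ v) := by
  rw [E8_eq_transpose_add, dotProduct_add_transpose_mulVec]
  exact even_two_mul _

/-- Columns: twice the simple roots of `E₈` in the coordinates of `ℝ⁸` (Bourbaki's labelling
`α₈, α₇, α₆, α₅, α₄, α₃, α₁, α₂`). -/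
def E8Roots : Matrix (Fin 8) (Fin 8) ℤ :=
  !![ 0,  0,  0,  0,  0, -2,  1,  2;
      0,  0,  0,  0, -2,  2, -1,  2;
      0,  0,  0, -2,  2,  0, -1,  0;
      0,  0, -2,  2,  0,  0, -1,  0;
      0, -2,  2,  0,  0,  0, -1,  0;
     -2,  2,  0,  0,  0,  0, -1,  0;
      2,  0,  0,  0,  0,  0, -1,  0;
      0,  0,  0,  0,  0,  0,  1,  0]

lemma transpose_mul_E8Roots : E8Rootsᵀ * E8Roots = (4 : ℤ) • E8 := by decide

lemma posDefLat_E8 : PosDefLat E8 :=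
  posDefLat_of_transpose_mul_self_eq_smul E8Roots (by norm_num) transpose_mul_E8Roots
    isUnit_det_E8

lemma E8_not_represents_one : ¬ Represents E8 (1 : Matrix (Fin 8) (Fin 8) ℤ) :=
  not_represents_of_even even_dotProduct_E8_mulVec 0 (by decide)

lemma one_not_represents_E8 : ¬ Represents (1 : Matrix (Fin 8) (Fin 8) ℤ) E8 :=
  fun h => E8_not_represents_one (represents_symm_of_isUnit_det isUnit_det_E8 h)

theorem minimal_8_criterion_general :
    Represents E8 E8 ∧
    ¬ Represents E8 (1 : Matrix (Fin 8) (Fin 8) ℤ) ∧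
    Represents (1 : Matrix (Fin 8) (Fin 8) ℤ) (1 : Matrix (Fin 8) (Fin 8) ℤ) ∧
    ¬ Represents (1 : Matrix (Fin 8) (Fin 8) ℤ) E8 ∧
    ¬ IsCriterionSet 8 ({1} : Finset (Matrix (Fin 8) (Fin 8) ℤ)) ∧
    ¬ IsCriterionSet 8 ({E8} : Finset (Matrix (Fin 8) (Fin 8) ℤ)) :=
  ⟨represents_refl E8, E8_not_represents_one, represents_refl 1, one_not_represents_E8,
    not_isCriterionSet_singleton posDefLat_E8 one_not_represents_E8,
    not_isCriterionSet_singleton posDefLat_one E8_not_represents_one⟩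

/-- `{I_8, E_8}` is a minimal `8`-criterion set: each of the two lattices
represents itself but not the other, so neither singleton is an `8`-criterion
set. -/
theorem minimal_8_criterion
    (hOh : IsCriterionSet 8 ({1, E8} : Finset (Matrix (Fin 8) (Fin 8) ℤ))) :
    Represents E8 E8 ∧
    ¬ Represents E8 (1 : Matrix (Fin 8) (Fin 8) ℤ) ∧
    Represents (1 : Matrix (Fin 8) (Fin 8) ℤ) (1 : Matrix (Fin 8) (Fin 8) ℤ) ∧
    ¬ Represents (1 : Matrix (Fin 8) (Fin 8) ℤ) E8 ∧
    ¬ IsCriterionSet 8 ({1} : Finset (Matrix (Fin 8) (Fin 8) ℤ)) ∧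
    ¬ IsCriterionSet 8 ({E8} : Finset (Matrix (Fin 8) (Fin 8) ℤ)) :=
  minimal_8_criterion_general
end
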